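/- arXiv:1601.01233 — 5 statements merged into one kernel-verified Lean document; each statement's English description precedes it below -/
import Mathlib

section
/- There exists a family of λ-terms {s_n} such that |s_n| = O(n), s_n β-reduces to normal form in n steps, and the normal form of s_n has size at least 2^n (size-explosion: linear-size terms with linear-length reductions but exponential-size normal forms). -/
/-- Pure λ-terms. -/
inductive Term : Type
  | var : ℕ → Term
  | lam : ℕ → Term → Term
  | app : Term → Term → Term
  deriving DecidableEq

/-- Size of a λ-term, counting all constructors. -/
def Term.size : Term → ℕ
  | var _ => 1
  | lam _ t => 1 + size t
  | app t u => 1 + size t + size u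

/-- Meta-level substitution (assuming Barendregt's convention). -/
def Term.subst (x : ℕ) (u : Term) : Term → Term
  | var y => if y = x then u else var y
  | lam y t => if y = x then lam y t else lam y (subst x u t)
  | app t r => app (subst x u t) (subst x u r)

/-- β-reduction, closed under all contexts. -/
inductive Beta : Term → Term → Prop
  | beta (x : ℕ) (t u : Term) : Beta (.app (.lam x t) u) (t.subst x u)
  | lam (x : ℕ) {t t' : Term} : Beta t t' → Beta (.lam x t) (.lam x t')
  | appL {t t' : Term} (u : Term) : Beta t t' → Beta (.app t u) (.app t' u)
  | appR (t : Term) {u u' : Term} : Beta u u' → Beta (.app t u) (.app t u')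

/-- `RelPow r n a b`: `a` reduces to `b` in exactly `n` `r`-steps. -/
inductive RelPow {α : Type} (r : α → α → Prop) : ℕ → α → α → Prop
  | zero (a : α) : RelPow r 0 a a
  | succ {a b c : α} {n : ℕ} : r a b → RelPow r n b c → RelPow r (n + 1) a c

/-- `t` is a β-normal form. -/
def BetaNormal (t : Term) : Prop := ∀ u, ¬ Beta t u

/-! The term `δ = λx. x x` doubles a complete binary application tree of `x` in one step, so
`δ (δ (⋯ (δ x)))` with `n` copies of `δ` has size `O(n)`, reduces innermost-first in `n` steps,
and ends in the normal tree of depth `n`, which has `2^(n+1) - 1` nodes. -/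

theorem RelPow.map {α β : Type} {r : α → α → Prop} {s : β → β → Prop} (f : α → β)
    (hf : ∀ {a b}, r a b → s (f a) (f b)) {n : ℕ} {a b : α} (h : RelPow r n a b) :
    RelPow s n (f a) (f b) := by
  induction h with
  | zero a => exact .zero (f a)
  | succ hab _ ih => exact .succ (hf hab) ih

theorem RelPow.tail {α : Type} {r : α → α → Prop} {n : ℕ} {a b c : α}
    (hab : RelPow r n a b) (hbc : r b c) : RelPow r (n + 1) a c := by
  induction hab with
  | zero => exact .succ hbc (.zero c)
  | succ hab' _ ih => exact .succ hab' (ih hbc)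

theorem BetaNormal.app {t u : Term} (ht_lam : ∀ x b, t ≠ .lam x b) (ht : BetaNormal t)
    (hu : BetaNormal u) : BetaNormal (.app t u) := by
  intro v hv
  cases hv with
  | beta x b _ => exact ht_lam x b rfl
  | appL _ h => exact ht _ h
  | appR _ h => exact hu _ h

namespace Term

def binTree : ℕ → Term
  | 0 => var 0
  | n + 1 => app (binTree n) (binTree n)

def delta : Term := lam 0 (app (var 0) (var 0))

def deltaTower : ℕ → Term
  | 0 => var 0
  | n + 1 => app delta (deltaTower n)

theorem size_binTree_add_one (n : ℕ) : (binTree n).size + 1 = 2 ^ (n + 1) := by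
  induction n with
  | zero => rfl
  | succ n ih => simp only [binTree, size, pow_succ] at ih ⊢; omega

theorem size_deltaTower (n : ℕ) : (deltaTower n).size = 5 * n + 1 := by
  induction n with
  | zero => rfl
  | succ n ih => simp only [deltaTower, delta, size, ih]; ring

theorem subst_binTree (m n : ℕ) : subst 0 (binTree m) (binTree n) = binTree (n + m) := by
  induction n with
  | zero => simp [subst, binTree]
  | succ n ih => rw [Nat.add_right_comm, binTree, binTree, subst, ih]

theorem binTree_ne_lam (n : ℕ) (x : ℕ) (b : Term) : binTree n ≠ lam x b := by
  cases n <;> simp [binTree]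

theorem betaNormal_binTree (n : ℕ) : BetaNormal (binTree n) := by
  induction n with
  | zero => intro u h; cases h
  | succ n ih => exact BetaNormal.app (binTree_ne_lam n) ih ih

/- `Beta.beta` contracts `(λx. t) u` to `t.subst x u`, which by dot notation is
`Term.subst x t u`, i.e. `u[x := t]`. For the redex `δ T` with `T = binTree n` both this and the
usual contractum `(x x)[x := T] = T T` are `binTree (n + 1)`. -/
theorem beta_delta_binTree (n : ℕ) : Beta (app delta (binTree n)) (binTree (n + 1)) :=
  subst_binTree 1 n ▸ Beta.beta 0 (binTree 1) (binTree n)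

theorem deltaTower_relPow_binTree (n : ℕ) : RelPow Beta n (deltaTower n) (binTree n) := by
  induction n with
  | zero => exact .zero _
  | succ n ih => exact (ih.map (app delta) (Beta.appR delta)).tail (beta_delta_binTree n)

end Term

/-- Size-explosion: there is a family of λ-terms of size O(n) each reducing to β-normal
    form in n steps, whose normal form has size at least 2^n. -/
theorem size_explosion_family :
    ∃ (s : ℕ → Term) (k : ℕ), ∀ n : ℕ,
      (s n).size ≤ k * (n + 1) ∧
      ∃ u : Term, RelPow Beta n (s n) u ∧ BetaNormal u ∧ 2 ^ n ≤ u.size := by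
  refine ⟨Term.deltaTower, 5, fun n => ⟨?_, Term.binTree n, Term.deltaTower_relPow_binTree n,
    Term.betaNormal_binTree n, ?_⟩⟩
  · rw [Term.size_deltaTower]; omega
  · have hsize := Term.size_binTree_add_one n
    rw [pow_succ] at hsize
    omega
end

section
/- In a high-level implementation system (⤳, ⤳_X), if t is a λ-term that is ⤳_X-normalizable, then t is ⤳-normalizable; conversely, if ⤳_X-reduction is strongly normalizing on ls-steps (local boundedness) and t is ⤳-normalizable, then t is ⤳_X-normalizable. -/
/-!
Projection turns every ⤳_X-derivation into a ⤳-derivation between the unfoldings, and the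
unfolding of a ⤳_X-normal term is ⤳-normal. Conversely, starting from a term whose unfolding
⤳-normalizes in `n` steps, ls-steps can only be taken finitely often and do not change the
unfolding, while a dB-step projects to a ⤳-step, which by determinism is the next step of the
normalizing ⤳-derivation; so after `n` dB-steps no dB-step is possible any more.
-/

open Relation

theorem WellFounded.exists_reflTransGen_normal {α : Type*} {r : α → α → Prop}
    (hwf : WellFounded (fun a b => r b a)) (a : α) :
    ∃ b, ReflTransGen r a b ∧ ∀ c, ¬ r b c := by
  induction a using hwf.induction with
  | _ a ih =>
    by_cases hstep : ∃ b, r a b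
    · obtain ⟨b, hab⟩ := hstep
      obtain ⟨c, hbc, hc⟩ := ih b hab
      exact ⟨c, .head hab hbc, hc⟩
    · exact ⟨a, .refl, not_exists.mp hstep⟩

section HighLevelImplementation

variable {T : Type*} {unf : T → T} {lead dB ls : T → T → Prop}

theorem unf_eq_of_reflTransGen_ls (hls : ∀ a b, ls a b → unf a = unf b) {a b : T}
    (hab : ReflTransGen ls a b) : unf a = unf b := by
  induction hab with
  | refl => rfl
  | tail _ hbc ih => exact ih.trans (hls _ _ hbc)

theorem reflTransGen_lead_unf (hls : ∀ a b, ls a b → unf a = unf b)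
    (hdb : ∀ a b, dB a b → lead (unf a) (unf b)) {a b : T}
    (hab : ReflTransGen (fun a b => dB a b ∨ ls a b) a b) :
    ReflTransGen lead (unf a) (unf b) := by
  induction hab with
  | refl => exact .refl
  | tail _ hbc ih => exact hbc.elim (fun h => ih.tail (hdb _ _ h)) (fun h => hls _ _ h ▸ ih)

theorem exists_normal_of_reflTransGen_lead_unf (hdet : ∀ a b c, lead a b → lead a c → b = c)
    (hls : ∀ a b, ls a b → unf a = unf b) (hdb : ∀ a b, dB a b → lead (unf a) (unf b))
    (hwf : WellFounded (fun a b => ls b a)) {x s : T} (hxs : ReflTransGen lead x s)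
    (hs : ∀ r, ¬ lead s r) :
    ∀ a, unf a = x → ∃ u, ReflTransGen (fun a b => dB a b ∨ ls a b) a u ∧
      (∀ r, ¬ dB u r) ∧ (∀ r, ¬ ls u r) := by
  have ls_normalize : ∀ a, ∃ b, ReflTransGen (fun a b => dB a b ∨ ls a b) a b ∧
      unf b = unf a ∧ ∀ c, ¬ ls b c := fun a =>
    let ⟨b, hab, hb⟩ := hwf.exists_reflTransGen_normal a
    ⟨b, ReflTransGen.mono (fun _ _ => Or.inr) _ _ hab,
      (unf_eq_of_reflTransGen_ls hls hab).symm, hb⟩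
  induction hxs using ReflTransGen.head_induction_on with
  | refl =>
    intro a ha
    obtain ⟨b, hab, hba, hb⟩ := ls_normalize a
    exact ⟨b, hab, fun c hbc => hs _ (hba.trans ha ▸ hdb b c hbc), hb⟩
  | head hxy _ ih =>
    intro a ha
    obtain ⟨b, hab, hba, hb⟩ := ls_normalize a
    by_cases hdB : ∃ c, dB b c
    · obtain ⟨c, hbc⟩ := hdB
      obtain ⟨u, hcu, hu⟩ := ih c (hdet _ _ _ (hba.trans ha ▸ hdb b c hbc) hxy)
      exact ⟨u, hab.trans (.head (Or.inl hbc) hcu), hu⟩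
    · exact ⟨b, hab, not_exists.mp hdB, hb⟩

end HighLevelImplementation

/-- Abstract high-level implementation system: ⤳ (`lead`) is a deterministic strategy on
λ-terms (the `pure` terms), ⤳_X is a partial strategy on terms with explicit substitutions
whose steps are partitioned into dB-steps (`dB`) and ls-steps (`ls`); `unf` is the unfolding,
which is the identity on pure terms. Hypotheses: normal form property (`hnf`), projection
property (`hls`, `hdb`).

Conclusion: (1) if `t` is ⤳_X-normalizable then it is ⤳-normalizable; (2) conversely, if
ls-reduction is strongly normalizing (local boundedness) and `t` is ⤳-normalizable, then
`t` is ⤳_X-normalizable. -/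
theorem high_level_normalization {T : Type} (pure : T → Prop) (unf : T → T)
    (lead dB ls : T → T → Prop)
    (hdet : ∀ a b c, lead a b → lead a c → b = c)
    (hpure : ∀ a, pure a → unf a = a)
    (hnf : ∀ a, (∀ b, ¬ dB a b) → (∀ b, ¬ ls a b) → ∀ c, ¬ lead (unf a) c)
    (hls : ∀ a b, ls a b → unf a = unf b)
    (hdb : ∀ a b, dB a b → lead (unf a) (unf b))
    (t : T) (ht : pure t) :
    ((∃ u, Relation.ReflTransGen (fun a b => dB a b ∨ ls a b) t u ∧
        (∀ r, ¬ dB u r) ∧ (∀ r, ¬ ls u r)) →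
      ∃ s, Relation.ReflTransGen lead t s ∧ ∀ r, ¬ lead s r)
    ∧
    (WellFounded (fun a b => ls b a) →
      (∃ s, Relation.ReflTransGen lead t s ∧ ∀ r, ¬ lead s r) →
      ∃ u, Relation.ReflTransGen (fun a b => dB a b ∨ ls a b) t u ∧
        (∀ r, ¬ dB u r) ∧ (∀ r, ¬ ls u r)) := by
  constructor
  · rintro ⟨u, htu, hdBu, hlsu⟩
    exact ⟨unf u, hpure t ht ▸ reflTransGen_lead_unf hls hdb htu, hnf u hdBu hlsu⟩
  · rintro hwf ⟨s, hts, hs⟩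
    exact exists_normal_of_reflTransGen_lead_unf hdet hls hdb hwf hts hs t (hpure t ht)
end

section
/- In a locally bounded high-level implementation system, every ⤳_X-derivation ρ from a λ-term is at most quadratically longer than its unfolding: |ρ| = O(|ρ↓|²), where |ρ↓| equals the number of dB-steps of ρ. -/
/-- A ⤳_X-derivation from `a` to `b` with `d` dB-steps and `l` ls-steps. -/
inductive Deriv {T : Type} (dB ls : T → T → Prop) : T → T → ℕ → ℕ → Prop
  | refl (a : T) : Deriv dB ls a a 0 0
  | db {a b c : T} {d l : ℕ} : dB a b → Deriv dB ls b c d l → Deriv dB ls a c (d + 1) l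
  | ls {a b c : T} {d l : ℕ} : ls a b → Deriv dB ls b c d l → Deriv dB ls a c d (l + 1)

theorem RelPow.snoc {α : Type} {r : α → α → Prop} {n : ℕ} {a b c : α}
    (h : RelPow r n a b) (hbc : r b c) : RelPow r (n + 1) a c := by
  induction h with
  | zero => exact .succ hbc (.zero c)
  | succ hab _ ih => exact .succ hab (ih hbc)

section LocallyBounded

variable {T : Type} {dB ls : T → T → Prop} {c : ℕ}

theorem Deriv.ls_relPow {a b u : T} {j d l : ℕ} (hab : RelPow ls j a b)
    (h : Deriv dB ls b u d l) : Deriv dB ls a u d (j + l) := by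
  induction hab with
  | zero => simpa using h
  | succ hstep _ ih =>
    rw [Nat.add_right_comm]
    exact .ls hstep (ih h)

variable (dB ls c) in
/-- Local boundedness at `m`, as if `m` had been reached by a derivation with `e` dB-steps. -/
def LocallyBoundedFrom (e : ℕ) (m : T) : Prop :=
  ∀ u d l, Deriv dB ls m u d l → ∀ v k, RelPow ls k u v → k ≤ c * (e + d)

namespace LocallyBoundedFrom

variable {e : ℕ}

theorem run_le {m m' : T} {j : ℕ} (hm : LocallyBoundedFrom dB ls c e m)
    (hrun : RelPow ls j m m') : j ≤ c * e :=
  hm m 0 0 (.refl m) m' j hrun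

theorem of_ls_relPow_dB {m' m b : T} {j : ℕ} (hm' : LocallyBoundedFrom dB ls c e m')
    (hrun : RelPow ls j m' m) (hdB : dB m b) : LocallyBoundedFrom dB ls c (e + 1) b := by
  intro u d l h v k hk
  rw [Nat.add_right_comm]
  exact hm' u (d + 1) (j + l) (Deriv.ls_relPow hrun (.db hdB h)) v k hk

/-- The pending run of `j` ls-steps is bounded by `c·e`, and each of the `d` later runs by
`c·(e + d)`. -/
theorem ls_count_le {m' m u : T} {j d l : ℕ} (hm' : LocallyBoundedFrom dB ls c e m')
    (hrun : RelPow ls j m' m) (h : Deriv dB ls m u d l) :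
    j + l ≤ c * e + c * d * (e + d) := by
  induction h generalizing e j m' with
  | refl => simpa using hm'.run_le hrun
  | ls hstep _ ih =>
    have := ih hm' (hrun.snoc hstep)
    omega
  | @db m b u d l hdB _ ih =>
    have hj : j ≤ c * e := hm'.run_le hrun
    have hl := ih (hm'.of_ls_relPow_dB hrun hdB) (.zero b)
    nlinarith

end LocallyBoundedFrom

end LocallyBounded

theorem quadratic_bound_general {T : Type} (pure : T → Prop)
    (dB ls : T → T → Prop)
    (c : ℕ)
    (hlb : ∀ t u d l, pure t → Deriv dB ls t u d l →
      ∀ v k, RelPow ls k u v → k ≤ c * d) :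
    ∀ t u d l, pure t → Deriv dB ls t u d l → d + l ≤ d + c * d ^ 2 := by
  intro t u d l ht h
  have hbounded : LocallyBoundedFrom dB ls c 0 t := fun u d l h v k hk => by
    simpa using hlb t u d l ht h v k hk
  have hl : l ≤ c * d ^ 2 := by
    simpa [sq, mul_assoc] using hbounded.ls_count_le (.zero t) h
  omega

/-- Quadratic overhead: in a locally bounded high-level implementation system, every
⤳_X-derivation ρ from a λ-term has length at most quadratic in the number of its
dB-steps, which is the length of its unfolding ρ↓: |ρ| = d + l ≤ d + c·d². -/
theorem quadratic_bound {T : Type} (pure : T → Prop) (unf : T → T)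
    (lead dB ls : T → T → Prop)
    (hdet : ∀ a b c, lead a b → lead a c → b = c)
    (hpure : ∀ a, pure a → unf a = a)
    (hnf : ∀ a, (∀ b, ¬ dB a b) → (∀ b, ¬ ls a b) → ∀ c, ¬ lead (unf a) c)
    (hls : ∀ a b, ls a b → unf a = unf b)
    (hdb : ∀ a b, dB a b → lead (unf a) (unf b))
    (c : ℕ)
    (hlb : ∀ t u d l, pure t → Deriv dB ls t u d l →
      ∀ v k, RelPow ls k u v → k ≤ c * d) :
    ∀ t u d l, pure t → Deriv dB ls t u d l → d + l ≤ d + c * d ^ 2 :=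
  quadratic_bound_general pure dB ls c hlb
end

section
/- If a derivation ρ : t ⤳_X* u has the subterm property (all terms duplicated along ρ are subterms of t), then |u| ≤ (|ρ| + 1) · |t|, i.e., the size of the final term is bilinear in the length of the derivation and the size of the initial term. -/
/-- Terms of the linear substitution calculus: variables, abstractions, applications,
and explicit substitutions `t[x←u]` (`sub t x u`). -/
inductive LTerm : Type
  | var : ℕ → LTerm
  | lam : ℕ → LTerm → LTerm
  | app : LTerm → LTerm → LTerm
  | sub : LTerm → ℕ → LTerm → LTerm
  deriving DecidableEq

namespace LTerm

/-- Meta-level substitution `t{x←u}` (assuming Barendregt's convention). -/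
def subst (x : ℕ) (u : LTerm) : LTerm → LTerm
  | var y => if y = x then u else var y
  | lam y t => if y = x then lam y t else lam y (subst x u t)
  | app t r => app (subst x u t) (subst x u r)
  | sub t y r => if y = x then sub t y (subst x u r)
                 else sub (subst x u t) y (subst x u r)

/-- Free variables. -/
def fv : LTerm → Finset ℕ
  | var x => {x}
  | lam x t => fv t \ {x}
  | app t u => fv t ∪ fv u
  | sub t x u => (fv t \ {x}) ∪ fv u

/-- Pure λ-terms: no explicit substitutions. -/
def IsPure : LTerm → Prop
  | var _ => True
  | lam _ t => IsPure t
  | app t u => IsPure t ∧ IsPure u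
  | sub _ _ _ => False

/-- Unfolding: execute all explicit substitutions at the meta-level. -/
def unf : LTerm → LTerm
  | var x => var x
  | lam x t => lam x (unf t)
  | app t u => app (unf t) (unf u)
  | sub t x u => subst x (unf u) (unf t)

/-- Size of a term, counting all constructors. -/
def size : LTerm → ℕ
  | var _ => 1
  | lam _ t => 1 + size t
  | app t u => 1 + size t + size u
  | sub t _ u => 1 + size t + size u

end LTerm

/-- Shallow one-hole contexts (the hole does not occur inside the content of an
explicit substitution). -/
inductive SCtx : Type
  | hole : SCtx
  | lam : ℕ → SCtx → SCtx
  | appL : SCtx → LTerm → SCtx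
  | appR : LTerm → SCtx → SCtx
  | sub : SCtx → ℕ → LTerm → SCtx

namespace SCtx

/-- Plugging a term into a context (possibly capturing variables). -/
def plug : SCtx → LTerm → LTerm
  | hole, t => t
  | lam x C, t => .lam x (plug C t)
  | appL C u, t => .app (plug C t) u
  | appR u C, t => .app u (plug C t)
  | sub C x u, t => .sub (plug C t) x u

/-- Plugging a context into a context. -/
def comp : SCtx → SCtx → SCtx
  | hole, D => D
  | lam x C, D => lam x (comp C D)
  | appL C u, D => appL (comp C D) u
  | appR u C, D => appR u (comp C D)
  | sub C x u, D => sub (comp C D) x u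

/-- The variable `x` is captured by `C` (bound on the path to the hole). -/
def captures : SCtx → ℕ → Prop
  | hole, _ => False
  | lam y C, x => y = x ∨ captures C x
  | appL C _, x => captures C x
  | appR _ C, x => captures C x
  | sub C y _, x => y = x ∨ captures C x

/-- Substitution on contexts, leaving the hole unchanged. -/
def substCtx (x : ℕ) (u : LTerm) : SCtx → SCtx
  | hole => hole
  | lam y C => if y = x then lam y C else lam y (substCtx x u C)
  | appL C t => appL (substCtx x u C) (LTerm.subst x u t)
  | appR t C => appR (LTerm.subst x u t) (substCtx x u C)
  | sub C y t => if y = x then sub C y (LTerm.subst x u t)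
                 else sub (substCtx x u C) y (LTerm.subst x u t)

/-- Context unfolding. -/
def unfCtx : SCtx → SCtx
  | hole => hole
  | lam x C => lam x (unfCtx C)
  | appL C t => appL (unfCtx C) (LTerm.unf t)
  | appR t C => appR (LTerm.unf t) (unfCtx C)
  | sub C x t => substCtx x (LTerm.unf t) (unfCtx C)

/-- Substitution contexts L ::= ⟨·⟩ | L[x←t]. -/
inductive IsSubCtx : SCtx → Prop
  | hole : IsSubCtx hole
  | sub {L : SCtx} (x : ℕ) (t : LTerm) : IsSubCtx L → IsSubCtx (sub L x t)

/-- Applicative contexts: the hole, possibly surrounded by explicit substitutions,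
is in function position of an application, i.e. C = D⟨L u⟩. -/
def IsApplicative (C : SCtx) : Prop :=
  ∃ (D L : SCtx) (u : LTerm), IsSubCtx L ∧ C = comp D (appL L u)

end SCtx

/-- Root dB-rule (β at a distance): L⟨λx.t⟩ u → L⟨t[x←u]⟩. -/
def RootDB (a b : LTerm) : Prop :=
  ∃ (L : SCtx) (x : ℕ) (t u : LTerm), SCtx.IsSubCtx L ∧
    a = .app (SCtx.plug L (.lam x t)) u ∧ b = SCtx.plug L (.sub t x u)

/-- Shallow dB-steps: closure of the root dB-rule under shallow contexts. -/
def DBStep (a b : LTerm) : Prop :=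
  ∃ (C : SCtx) (t u : LTerm), RootDB t u ∧ a = SCtx.plug C t ∧ b = SCtx.plug C u

/-- Root ls-rule: C⟨x⟩[x←u] → C⟨u⟩[x←u] (with Barendregt's convention: C does not
capture x nor the free variables of u, and x does not occur in u). -/
def RootLS (a b : LTerm) : Prop :=
  ∃ (C : SCtx) (x : ℕ) (u : LTerm),
    ¬ SCtx.captures C x ∧ x ∉ LTerm.fv u ∧ (∀ y ∈ LTerm.fv u, ¬ SCtx.captures C y) ∧
    a = .sub (SCtx.plug C (.var x)) x u ∧ b = .sub (SCtx.plug C u) x u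

/-- Shallow ls-steps: closure of the root ls-rule under shallow contexts. -/
def LSStep (a b : LTerm) : Prop :=
  ∃ (C : SCtx) (t u : LTerm), RootLS t u ∧ a = SCtx.plug C t ∧ b = SCtx.plug C u

/-- β-steps on (unfolded) terms. -/
def BetaStep (a b : LTerm) : Prop :=
  ∃ (C : SCtx) (x : ℕ) (t u : LTerm),
    a = SCtx.plug C (.app (.lam x t) u) ∧ b = SCtx.plug C (LTerm.subst x u t)

/-- Subterm relation. -/
inductive SubtermOf : LTerm → LTerm → Prop
  | refl (t : LTerm) : SubtermOf t t
  | lam {s t : LTerm} (x : ℕ) : SubtermOf s t → SubtermOf s (.lam x t)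
  | appL {s t : LTerm} (u : LTerm) : SubtermOf s t → SubtermOf s (.app t u)
  | appR {s u : LTerm} (t : LTerm) : SubtermOf s u → SubtermOf s (.app t u)
  | subL {s t : LTerm} (x : ℕ) (u : LTerm) : SubtermOf s t → SubtermOf s (.sub t x u)
  | subR {s u : LTerm} (t : LTerm) (x : ℕ) : SubtermOf s u → SubtermOf s (.sub t x u)

/-- An ls-step from `a` to `b` duplicating the term `r`:
F⟨C⟨x⟩[x←r]⟩ → F⟨C⟨r⟩[x←r]⟩. -/
def LSdup (r a b : LTerm) : Prop :=
  ∃ (F C : SCtx) (x : ℕ),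
    a = SCtx.plug F (.sub (SCtx.plug C (.var x)) x r) ∧
    b = SCtx.plug F (.sub (SCtx.plug C r) x r)

/-- A derivation with the subterm property: every ls-step duplicates a subterm of `t0`. -/
inductive DerivSub (t0 : LTerm) : LTerm → LTerm → ℕ → ℕ → Prop
  | refl (a : LTerm) : DerivSub t0 a a 0 0
  | db {a b c : LTerm} {d l : ℕ} :
      DBStep a b → DerivSub t0 b c d l → DerivSub t0 a c (d + 1) l
  | ls {a b c : LTerm} {d l : ℕ} {r : LTerm} :
      LSdup r a b → SubtermOf r t0 → DerivSub t0 b c d l → DerivSub t0 a c d (l + 1)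

/-!
A dB-step shrinks the term, and an ls-step duplicating `r` grows it by less than `|r|`.
Under the subterm property every duplicated `r` is a subterm of `t`, so each ls-step adds
at most `|t|` to the size.
-/

namespace SCtx

def size : SCtx → ℕ
  | hole => 0
  | lam _ C => 1 + C.size
  | appL C u => 1 + C.size + u.size
  | appR u C => 1 + u.size + C.size
  | sub C _ u => 1 + C.size + u.size

theorem size_plug (C : SCtx) (s : LTerm) : (C.plug s).size = C.size + s.size := by
  induction C <;> simp only [plug, size, LTerm.size, *] <;> omega

end SCtx

theorem SubtermOf.size_le {s t : LTerm} (h : SubtermOf s t) : s.size ≤ t.size := by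
  induction h with
  | refl => exact le_rfl
  | _ => simp only [LTerm.size]; omega

theorem RootDB.size_lt {a b : LTerm} (h : RootDB a b) : b.size < a.size := by
  obtain ⟨L, x, t, u, -, rfl, rfl⟩ := h
  simp only [SCtx.size_plug, LTerm.size]
  omega

theorem DBStep.size_lt {a b : LTerm} (h : DBStep a b) : b.size < a.size := by
  obtain ⟨C, t, u, hroot, rfl, rfl⟩ := h
  simpa only [SCtx.size_plug, Nat.add_lt_add_iff_left] using hroot.size_lt

theorem LSdup.size_add_one {r a b : LTerm} (h : LSdup r a b) : b.size + 1 = a.size + r.size := by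
  obtain ⟨F, C, x, rfl, rfl⟩ := h
  simp only [SCtx.size_plug, LTerm.size]
  omega

theorem DerivSub.size_le {t₀ a c : LTerm} {d l : ℕ} (h : DerivSub t₀ a c d l) :
    c.size ≤ a.size + l * t₀.size := by
  induction h with
  | refl => simp
  | db hdb _ ih => have := hdb.size_lt; omega
  | @ls a b c d l r hls hsub _ ih =>
    have hb : b.size ≤ a.size + t₀.size := by
      have := hls.size_add_one; have := hsub.size_le; omega
    calc c.size ≤ b.size + l * t₀.size := ih
      _ ≤ a.size + (l + 1) * t₀.size := by rw [Nat.succ_mul]; omega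

/-- Subterm property ⇒ no size-explosion: if ρ : t →* u has the subterm property
then |u| ≤ (|ρ| + 1)·|t|, where |ρ| = d + l is the length of ρ. -/
theorem subterm_no_size_explosion (t u : LTerm) (d l : ℕ)
    (hρ : DerivSub t t u d l) :
    u.size ≤ (d + l + 1) * t.size :=
  calc u.size ≤ t.size + l * t.size := hρ.size_le
    _ = (l + 1) * t.size := by ring
    _ ≤ (d + l + 1) * t.size := Nat.mul_le_mul_right _ (by omega)
end

section
/- Linear substitution steps preserve the unfolding: if t →_ls u in the shallow linear substitution calculus, then t↓ = u↓. -/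
/-! Unfolding commutes with plugging into a shallow context that captures no free variable of
the plugged term, and unfolding is a congruence, so only a root step
`C⟨x⟩[x←r] → C⟨r⟩[x←r]` needs attention. Its two sides unfold to `(C↓⟨x⟩){x←r↓}` and
`(C↓⟨r↓⟩){x←r↓}`. As `C↓` does not capture `x`, the substitution goes through `C↓` down to the
hole; there it turns `x` into `r↓` and leaves `r↓` alone because `x` is not free in `r↓`. -/

namespace LTerm

theorem fv_subst_subset (x : ℕ) (v t : LTerm) : fv (subst x v t) ⊆ (fv t \ {x}) ∪ fv v := by
  induction t <;> grind [subst, fv]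

theorem subst_of_notMem_fv {x : ℕ} (v : LTerm) {t : LTerm} (h : x ∉ fv t) : subst x v t = t := by
  induction t <;> grind [fv, subst]

theorem fv_unf_subset (t : LTerm) : fv (unf t) ⊆ fv t := by
  induction t with
  | var x => rfl
  | lam x t ih => exact Finset.sdiff_subset_sdiff ih le_rfl
  | app t r iht ihr => exact Finset.union_subset_union iht ihr
  | sub t x r iht ihr =>
    exact (fv_subst_subset x (unf r) (unf t)).trans
      (Finset.union_subset_union (Finset.sdiff_subset_sdiff iht le_rfl) ihr)

end LTerm

namespace SCtx

open LTerm

@[simp]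
theorem captures_substCtx (x : ℕ) (v : LTerm) (C : SCtx) (y : ℕ) :
    captures (substCtx x v C) y ↔ captures C y := by
  induction C with
  | lam z C ih | sub C z t ih => by_cases hz : z = x <;> simp [substCtx, hz, captures, ih]
  | _ => simp_all [substCtx, captures]

theorem captures_of_captures_unfCtx {C : SCtx} {y : ℕ} (h : captures (unfCtx C) y) :
    captures C y := by
  induction C <;> grind [unfCtx, captures, captures_substCtx]

theorem subst_plug (x : ℕ) (v : LTerm) {C : SCtx} (s : LTerm) (h : ¬ captures C x) :
    subst x v (plug C s) = plug (substCtx x v C) (subst x v s) := by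
  induction C <;> simp_all [plug, substCtx, subst, captures]

theorem subst_plug_of_subst_eq (x : ℕ) (v : LTerm) (C : SCtx) {s : LTerm}
    (h : subst x v s = s) : subst x v (plug C s) = plug (substCtx x v C) s := by
  induction C with
  | lam z C ih | sub C z t ih => by_cases hz : z = x <;> simp [plug, substCtx, subst, hz, ih]
  | _ => simp_all [plug, substCtx, subst]

theorem unf_plug {C : SCtx} {s : LTerm} (h : ∀ y ∈ fv (unf s), ¬ captures C y) :
    unf (plug C s) = plug (unfCtx C) (unf s) := by
  induction C with
  | hole => rfl
  | sub C z t ih =>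
    have hz : z ∉ fv (unf s) := fun hz => h z hz (Or.inl rfl)
    rw [plug, unf, ih fun y hy hC => h y hy (Or.inr hC), unfCtx,
      subst_plug_of_subst_eq _ _ _ (subst_of_notMem_fv _ hz)]
  | _ => simp_all [plug, unfCtx, unf, captures]

theorem unf_plug_congr (C : SCtx) {s s' : LTerm} (h : unf s = unf s') :
    unf (plug C s) = unf (plug C s') := by
  induction C <;> simp_all [plug, unf]

end SCtx

open LTerm SCtx in
theorem RootLS.unf_eq {a b : LTerm} (h : RootLS a b) : unf a = unf b := by
  obtain ⟨C, x, r, hx, hxr, hr, rfl, rfl⟩ := h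
  have hx' : ¬ captures (unfCtx C) x := mt captures_of_captures_unfCtx hx
  have hxr' : x ∉ fv (unf r) := fun h => hxr (fv_unf_subset r h)
  have hr' : ∀ y ∈ fv (unf r), ¬ captures C y := fun y hy => hr y (fv_unf_subset r hy)
  have hvar : ∀ y ∈ fv (unf (var x)), ¬ captures C y := by simpa [unf, fv] using hx
  calc unf (.sub (plug C (var x)) x r)
      = subst x (unf r) (plug (unfCtx C) (var x)) := by rw [unf, unf_plug hvar, unf]
    _ = plug (substCtx x (unf r) (unfCtx C)) (unf r) := by rw [subst_plug _ _ _ hx']; simp [subst]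
    _ = subst x (unf r) (plug (unfCtx C) (unf r)) :=
      (subst_plug_of_subst_eq _ _ _ (subst_of_notMem_fv _ hxr')).symm
    _ = unf (.sub (plug C r) x r) := by rw [unf, unf_plug hr']

/-- ls-steps project on equality: linear substitution steps preserve the unfolding. -/
theorem ls_preserves_unfolding (t u : LTerm) (h : LSStep t u) :
    LTerm.unf t = LTerm.unf u := by
  obtain ⟨C, a, b, hab, rfl, rfl⟩ := h
  exact SCtx.unf_plug_congr C hab.unf_eq
end
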